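/- arXiv:2302.01198 — 8 statements merged into one kernel-verified Lean document; each statement's English description precedes it below -/
import Mathlib

section
/- Let α be a finite nonempty type and n a natural number. Let μ be a probability mass function (PMF) on Matrix (Fin n) (Fin n) α, and let ν be the PMF of the random matrix π • b obtained by sampling π uniformly from the permutations of Fin n and b from μ independently (i.e., ν is the pushforward of the product of the uniform PMF on Equiv.Perm (Fin n) with μ under the map (π, b) ↦ π • b). Then for every matrix a : Matrix (Fin n) (Fin n) α and every permutation σ of Fin n, ν a = ν (σ • a); i.e., the resulting distribution is finitely (jointly) exchangeable: isomorphic graphs receive equal probability. -/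
/-- The action of a permutation on an adjacency matrix: relabel node identifiers,
`(π • a) i j = a (π⁻¹ i) (π⁻¹ j)`. -/
def permSMul {α : Type*} {n : ℕ} (π : Equiv.Perm (Fin n)) (a : Matrix (Fin n) (Fin n) α) :
    Matrix (Fin n) (Fin n) α :=
  fun i j => a (π⁻¹ i) (π⁻¹ j)

/-!
Relabelling by a uniformly random permutation symmetrizes any law: if `g` is uniform on a finite
group `G` and independent of `b`, then `σ • (g • b) = (σ * g) • b` and `σ * g` is again uniform,
so `g • b` and `σ • (g • b)` have the same law.
-/

namespace PMF

variable {α β γ : Type*}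

theorem map_apply_of_injective {f : α → β} (hf : Function.Injective f) (p : PMF α) (a : α) :
    p.map f (f a) = p a := by
  rw [map_apply, tsum_eq_single a (fun a' ha' => if_neg (hf.ne ha').symm), if_pos rfl]

theorem map_uniformOfFintype_equiv [Fintype α] [Nonempty α] [Fintype β] [Nonempty β]
    (e : α ≃ β) : (uniformOfFintype α).map e = uniformOfFintype β := by
  ext b
  rw [← e.apply_symm_apply b, map_apply_of_injective e.injective, uniformOfFintype_apply,
    uniformOfFintype_apply, Fintype.card_congr e]

theorem map_bind_map_prodMk (p : PMF α) (q : PMF β) (f : α → β → γ) :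
    (p.bind fun a => q.map (Prod.mk a)).map (fun ab => f ab.1 ab.2) =
      p.bind fun a => q.map (f a) := by
  simp only [map_bind, map_comp]
  rfl

section Symmetrize

variable (G : Type*) {X : Type*} [Group G] [Fintype G] [MulAction G X]

noncomputable def symmetrize (μ : PMF X) : PMF X :=
  (uniformOfFintype G).bind fun g => μ.map (g • ·)

variable {G}

theorem uniformOfFintype_bind_mul_left (σ : G) (f : G → PMF α) :
    (uniformOfFintype G).bind (fun g => f (σ * g)) = (uniformOfFintype G).bind f := by
  conv_rhs => rw [← map_uniformOfFintype_equiv (Equiv.mulLeft σ), bind_map]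
  rfl

theorem map_smul_symmetrize (μ : PMF X) (σ : G) :
    (symmetrize G μ).map (σ • ·) = symmetrize G μ := by
  simp only [symmetrize, map_bind, map_comp]
  conv_rhs => rw [← uniformOfFintype_bind_mul_left σ]
  simp only [Function.comp_def, mul_smul]

theorem symmetrize_apply_smul (μ : PMF X) (σ : G) (x : X) :
    symmetrize G μ (σ • x) = symmetrize G μ x := by
  simpa only [map_smul_symmetrize] using
    map_apply_of_injective (MulAction.injective σ) (symmetrize G μ) x

end Symmetrize

end PMF

instance permSMul.instMulAction {α : Type*} {n : ℕ} :
    MulAction (Equiv.Perm (Fin n)) (Matrix (Fin n) (Fin n) α) where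
  smul := permSMul
  one_smul _ := rfl
  mul_smul _ _ _ := rfl

theorem stmt0_general {α : Type*} {n : ℕ}
    (μ : PMF (Matrix (Fin n) (Fin n) α))
    (prodPMF : PMF (Equiv.Perm (Fin n) × Matrix (Fin n) (Fin n) α))
    (hprod : prodPMF =
      (PMF.uniformOfFintype (Equiv.Perm (Fin n))).bind (fun π => μ.map (fun b => (π, b))))
    (ν : PMF (Matrix (Fin n) (Fin n) α))
    (hν : ν = prodPMF.map (fun pb => permSMul pb.1 pb.2)) :
    ∀ (a : Matrix (Fin n) (Fin n) α) (σ : Equiv.Perm (Fin n)),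
      ν a = ν (permSMul σ a) := by
  intro a σ
  have hν_symm : ν = PMF.symmetrize (Equiv.Perm (Fin n)) μ := by
    rw [hν, hprod, PMF.map_bind_map_prodMk]
    rfl
  rw [hν_symm]
  exact (PMF.symmetrize_apply_smul μ σ a).symm

/-- If `ν` is the law of `π • b` where `π` is sampled uniformly from the permutations of
`Fin n` and `b` is sampled from `μ` independently, then `ν` is finitely (jointly)
exchangeable: isomorphic graphs receive equal probability. -/
theorem stmt0 {α : Type*} [Fintype α] [Nonempty α] {n : ℕ}
    (μ : PMF (Matrix (Fin n) (Fin n) α))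
    (prodPMF : PMF (Equiv.Perm (Fin n) × Matrix (Fin n) (Fin n) α))
    (hprod : prodPMF =
      (PMF.uniformOfFintype (Equiv.Perm (Fin n))).bind (fun π => μ.map (fun b => (π, b))))
    (ν : PMF (Matrix (Fin n) (Fin n) α))
    (hν : ν = prodPMF.map (fun pb => permSMul pb.1 pb.2)) :
    ∀ (a : Matrix (Fin n) (Fin n) α) (σ : Equiv.Perm (Fin n)),
      ν a = ν (permSMul σ a) :=
  stmt0_general μ prodPMF hprod ν hν
end

section
/- Let M : Matrix (Fin n) (Fin n) ℝ be any real matrix, π a permutation of Fin n, and P_π its permutation matrix. If P_π * M = M, then every eigenvector of M with nonzero eigenvalue is fixed by P_π; that is, for all x : Fin n → ℝ and λ : ℝ with λ ≠ 0, x ≠ 0 and M.mulVec x = λ • x, one has P_π.mulVec x = x (equivalently, x (π⁻¹ i) = x i for all i). -/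
/-- The permutation matrix of `π`: `(P_π) i j = 1` if `i = π j` and `0` otherwise. -/
def permMatrix {n : ℕ} (π : Equiv.Perm (Fin n)) : Matrix (Fin n) (Fin n) ℝ :=
  fun i j => if i = π j then 1 else 0

open scoped Matrix

-- Mathlib's `σ.permMatrix` has its `1` at `(i, σ i)`, the transpose of the convention here.
lemma permMatrix_eq_permMatrix_inv {n : ℕ} (π : Equiv.Perm (Fin n)) :
    permMatrix π = (π⁻¹).permMatrix ℝ := by
  ext i j
  simp [permMatrix, Equiv.Perm.inv_def, Equiv.symm_apply_eq]

lemma permMatrix_mulVec_apply {n : ℕ} (π : Equiv.Perm (Fin n)) (v : Fin n → ℝ) (i : Fin n) :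
    (permMatrix π *ᵥ v) i = v (π⁻¹ i) := by
  rw [permMatrix_eq_permMatrix_inv, Matrix.permMatrix_mulVec, Function.comp_apply]

lemma Matrix.mulVec_eq_self_of_mul_eq_self_of_mulVec_eq_smul {ι K : Type*} [Fintype ι]
    [Field K] {A M : Matrix ι ι K} (hAM : A * M = M) {x : ι → K} {c : K} (hc : c ≠ 0)
    (hx : M *ᵥ x = c • x) : A *ᵥ x = x := by
  have hfix : A *ᵥ (M *ᵥ x) = M *ᵥ x := by rw [Matrix.mulVec_mulVec, hAM]
  rw [hx, Matrix.mulVec_smul] at hfix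
  exact smul_right_injective _ hc hfix

/-- If `P_π * M = M`, then every eigenvector of `M` with nonzero eigenvalue is fixed
by `P_π` (equivalently, `x (π⁻¹ i) = x i` for all `i`). -/
theorem stmt2 {n : ℕ} (M : Matrix (Fin n) (Fin n) ℝ) (π : Equiv.Perm (Fin n))
    (h : permMatrix π * M = M) :
    ∀ (x : Fin n → ℝ) (lam : ℝ), lam ≠ 0 → x ≠ 0 → M.mulVec x = lam • x →
      (permMatrix π).mulVec x = x ∧ ∀ i, x (π⁻¹ i) = x i := by
  intro x lam hlam _ hx
  have hfix := Matrix.mulVec_eq_self_of_mul_eq_self_of_mulVec_eq_smul h hlam hx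
  exact ⟨hfix, fun i => by rw [← permMatrix_mulVec_apply π x, hfix]⟩
end

section
/- Let M : Matrix (Fin n) (Fin n) ℝ be a real symmetric matrix, π a permutation of Fin n, and P_π its permutation matrix. If every eigenvector of M with nonzero eigenvalue is fixed by P_π (i.e., for all x ≠ 0 and λ ≠ 0 with M.mulVec x = λ • x one has P_π.mulVec x = x), then P_π * M = M and M * P_π = M. -/
namespace Matrix

section Hermitian

variable {𝕜 n : Type*} [RCLike 𝕜] [Fintype n] [DecidableEq n] {A B : Matrix n n 𝕜}

theorem IsHermitian.mulVec_mulVec_eigenvectorBasis (hA : A.IsHermitian)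
    (hB : ∀ (x : n → 𝕜) (μ : 𝕜), μ ≠ 0 → x ≠ 0 → A *ᵥ x = μ • x → B *ᵥ x = x) (j : n) :
    B *ᵥ (A *ᵥ ⇑(hA.eigenvectorBasis j)) = A *ᵥ ⇑(hA.eigenvectorBasis j) := by
  have hAv := hA.mulVec_eigenvectorBasis j
  rw [RCLike.real_smul_eq_coe_smul (K := 𝕜)] at hAv
  by_cases hzero : hA.eigenvalues j = 0
  · simp [hAv, hzero]
  · have hv : ⇑(hA.eigenvectorBasis j) ≠ 0 :=
      (WithLp.ofLp_eq_zero 2).ne.2 (hA.eigenvectorBasis.orthonormal.ne_zero j)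
    rw [hAv, mulVec_smul, hB _ _ (RCLike.ofReal_ne_zero.2 hzero) hv hAv]

theorem IsHermitian.mul_eq_self_of_mulVec_eigenvector (hA : A.IsHermitian)
    (hB : ∀ (x : n → 𝕜) (μ : 𝕜), μ ≠ 0 → x ≠ 0 → A *ᵥ x = μ • x → B *ᵥ x = x) :
    B * A = A := by
  set U : Matrix n n 𝕜 := (hA.eigenvectorUnitary : Matrix n n 𝕜)
  have hU : B * A * U = A * U := ext_of_mulVec_single fun j => by
    simp only [← mulVec_mulVec, U, eigenvectorUnitary_mulVec,
      hA.mulVec_mulVec_eigenvectorBasis hB]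
  have hUU : U * star U = 1 := Unitary.mul_star_self_of_mem hA.eigenvectorUnitary.2
  calc B * A = B * A * U * star U := by rw [mul_assoc _ U, hUU, mul_one]
    _ = A := by rw [hU, mul_assoc, hUU, mul_one]

end Hermitian

theorem IsSymm.mul_eq_self_of_mul_eq_self {R n : Type*} [CommSemiring R] [Fintype n]
    [DecidableEq n] {A Q : Matrix n n R} (hA : A.IsSymm) (hQ : Qᵀ * Q = 1) (h : Q * A = A) :
    A * Q = A := by
  have hQA : Qᵀ * A = A := by
    calc Qᵀ * A = Qᵀ * (Q * A) := by rw [h]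
      _ = A := by rw [← mul_assoc, hQ, one_mul]
  calc A * Q = (Qᵀ * A)ᵀ := by rw [transpose_mul, transpose_transpose, hA.eq]
    _ = A := by rw [hQA, hA.eq]

end Matrix

open Matrix

theorem permMatrix_eq_transpose {n : ℕ} (π : Equiv.Perm (Fin n)) :
    permMatrix π = (π.permMatrix ℝ)ᵀ := by
  ext i j
  simp [permMatrix, eq_comm]

theorem transpose_permMatrix_mul_self {n : ℕ} (π : Equiv.Perm (Fin n)) :
    (permMatrix π)ᵀ * permMatrix π = 1 := by
  rw [permMatrix_eq_transpose, transpose_transpose, transpose_permMatrix, ← permMatrix_mul,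
    inv_mul_cancel, permMatrix_one]

/-- If `M` is real symmetric and every eigenvector of `M` with nonzero eigenvalue is
fixed by `P_π`, then `P_π * M = M` and `M * P_π = M`. -/
theorem stmt3 {n : ℕ} (M : Matrix (Fin n) (Fin n) ℝ) (hM : M.IsSymm) (π : Equiv.Perm (Fin n))
    (h : ∀ (x : Fin n → ℝ) (lam : ℝ), lam ≠ 0 → x ≠ 0 → M.mulVec x = lam • x →
      (permMatrix π).mulVec x = x) :
    permMatrix π * M = M ∧ M * permMatrix π = M := by
  have hPM : permMatrix π * M = M :=
    (isHermitian_iff_isSymm.2 hM).mul_eq_self_of_mulVec_eigenvector h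
  exact ⟨hPM, hM.mul_eq_self_of_mul_eq_self (transpose_permMatrix_mul_self π) hPM⟩
end

section
/- Let a : Matrix (Fin n) (Fin n) ℝ be a binary matrix (every entry is 0 or 1), π a permutation of Fin n, and P_π its permutation matrix. Then the following are equivalent: (1) P_π * (a * aᵀ) = a * aᵀ, (a * aᵀ) * P_π = a * aᵀ, P_π * (aᵀ * a) = aᵀ * a, and (aᵀ * a) * P_π = aᵀ * a; (2) for all i and v in Fin n, a i v = a (π i) v and a v i = a v (π i), i.e., every node has exactly the same out- and in-neighborhood as its image under π. -/
/-!
Entries of `a * aᵀ` are the inner products of rows of `a`. If the rows `r` and `r'` have the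
same inner products with every row of `a`, then `⟪r - r', r - r'⟫ = 0`, so `r = r'`. Hence
`P_π` fixes `a * aᵀ` exactly when `π` fixes every row of `a`; applying this to `aᵀ` gives the
columns.
-/

open Matrix

section Gram

variable {ι κ R : Type*} [Fintype κ]

lemma mul_transpose_apply_eq_dotProduct [Mul R] [AddCommMonoid R] (a : Matrix ι κ R) (i j : ι) :
    (a * aᵀ) i j = a i ⬝ᵥ a j :=
  rfl

variable [CommRing R] [LinearOrder R] [IsStrictOrderedRing R]

lemma row_eq_of_mul_transpose_row_eq (a : Matrix ι κ R) {i i' : ι}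
    (h : ∀ j, (a * aᵀ) i j = (a * aᵀ) i' j) : a i = a i' := by
  simp only [mul_transpose_apply_eq_dotProduct] at h
  have hself : (a i - a i') ⬝ᵥ (a i - a i') = 0 := by
    rw [sub_dotProduct, dotProduct_sub, dotProduct_sub, h i, dotProduct_comm (a i') (a i), h i']
    ring
  exact sub_eq_zero.mp (dotProduct_self_eq_zero.mp hself)

end Gram

section PermMatrix

variable {n : ℕ} (π : Equiv.Perm (Fin n))

lemma permMatrix_mul_apply (M : Matrix (Fin n) (Fin n) ℝ) (i j : Fin n) :
    (permMatrix π * M) i j = M (π⁻¹ i) j := by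
  simp [Matrix.mul_apply, permMatrix, ← Equiv.Perm.inv_eq_iff_eq]

lemma mul_permMatrix_apply (M : Matrix (Fin n) (Fin n) ℝ) (i j : Fin n) :
    (M * permMatrix π) i j = M i (π j) := by
  simp [Matrix.mul_apply, permMatrix]

lemma permMatrix_mul_eq_self_iff (M : Matrix (Fin n) (Fin n) ℝ) :
    permMatrix π * M = M ↔ ∀ i j, M (π i) j = M i j := by
  simp only [← Matrix.ext_iff, permMatrix_mul_apply]
  exact ⟨fun h i j => by simpa using (h (π i) j).symm,
    fun h i j => by simpa using (h (π⁻¹ i) j).symm⟩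

lemma mul_permMatrix_eq_self_iff (M : Matrix (Fin n) (Fin n) ℝ) :
    M * permMatrix π = M ↔ ∀ i j, M i (π j) = M i j := by
  simp [← Matrix.ext_iff, mul_permMatrix_apply]

lemma permMatrix_fixes_mul_transpose_iff (b : Matrix (Fin n) (Fin n) ℝ) :
    (permMatrix π * (b * bᵀ) = b * bᵀ ∧ (b * bᵀ) * permMatrix π = b * bᵀ) ↔
      ∀ i, b (π i) = b i := by
  rw [permMatrix_mul_eq_self_iff, mul_permMatrix_eq_self_iff]
  refine ⟨fun h i => row_eq_of_mul_transpose_row_eq b (h.1 i), fun h => ⟨?_, ?_⟩⟩ <;>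
    simp [mul_transpose_apply_eq_dotProduct, h]

end PermMatrix

theorem stmt5_general {n : ℕ} (a : Matrix (Fin n) (Fin n) ℝ)
    (π : Equiv.Perm (Fin n)) :
    (permMatrix π * (a * aᵀ) = a * aᵀ ∧ (a * aᵀ) * permMatrix π = a * aᵀ ∧
      permMatrix π * (aᵀ * a) = aᵀ * a ∧ (aᵀ * a) * permMatrix π = aᵀ * a) ↔
    (∀ i v, a i v = a (π i) v ∧ a v i = a v (π i)) := by
  have hcols := permMatrix_fixes_mul_transpose_iff π aᵀ
  rw [transpose_transpose] at hcols
  rw [← and_assoc, permMatrix_fixes_mul_transpose_iff, hcols, ← forall_and]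
  refine forall_congr' fun i => ?_
  simp only [funext_iff, transpose_apply, ← forall_and, eq_comm]

/-- For a binary adjacency matrix `a`, the permutation matrix `P_π` fixes both Gram
matrices `a * aᵀ` and `aᵀ * a` (on the left and on the right) if and only if every
node has exactly the same out- and in-neighborhood as its image under `π`. -/
theorem stmt5 {n : ℕ} (a : Matrix (Fin n) (Fin n) ℝ) (ha : ∀ i j, a i j = 0 ∨ a i j = 1)
    (π : Equiv.Perm (Fin n)) :
    (permMatrix π * (a * aᵀ) = a * aᵀ ∧ (a * aᵀ) * permMatrix π = a * aᵀ ∧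
      permMatrix π * (aᵀ * a) = aᵀ * a ∧ (aᵀ * a) * permMatrix π = aᵀ * a) ↔
    (∀ i v, a i v = a (π i) v ∧ a v i = a v (π i)) :=
  stmt5_general a π
end

section
/- Let α be a type, a : Matrix (Fin n) (Fin n) α, and π a permutation of Fin n such that for all i and v in Fin n, a i v = a (π i) v and a v i = a v (π i). Then π is an automorphism of a: for all k and l in Fin n, a (π k) (π l) = a k l (equivalently, π • a = a). -/
theorem Matrix.apply_map_map_eq_of_rows_cols {ι α : Type*} (a : Matrix ι ι α) (f : ι → ι)
    (hrow : ∀ i v, a (f i) v = a i v) (hcol : ∀ i v, a v (f i) = a v i) (k l : ι) :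
    a (f k) (f l) = a k l := by
  rw [hrow, hcol]

theorem permSMul_eq_self_iff {α : Type*} {n : ℕ} (π : Equiv.Perm (Fin n))
    (a : Matrix (Fin n) (Fin n) α) :
    permSMul π a = a ↔ ∀ k l, a (π k) (π l) = a k l := by
  constructor
  · intro hfix k l
    simpa [permSMul] using (congrFun (congrFun hfix (π k)) (π l)).symm
  · intro hinv
    funext i j
    simpa [permSMul] using (hinv (π⁻¹ i) (π⁻¹ j)).symm

/-- If `π` maps every node to a node with identical out- and in-neighborhood, then `π`
is an automorphism of `a`: `a (π k) (π l) = a k l` for all `k, l` (equivalently,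
`π • a = a`). -/
theorem stmt6 {α : Type*} {n : ℕ} (a : Matrix (Fin n) (Fin n) α) (π : Equiv.Perm (Fin n))
    (h : ∀ i v, a i v = a (π i) v ∧ a v i = a v (π i)) :
    (∀ k l, a (π k) (π l) = a k l) ∧ permSMul π a = a := by
  have hinv : ∀ k l, a (π k) (π l) = a k l :=
    a.apply_map_map_eq_of_rows_cols π (fun i v => (h i v).1.symm) (fun i v => (h i v).2.symm)
  exact ⟨hinv, (permSMul_eq_self_iff π a).2 hinv⟩
end

section
/- Let a : Matrix (Fin n) (Fin n) ℝ and let i, j ∈ Fin n be such that for all v, a i v = a j v and a v i = a v j (nodes i and j have identical out- and in-neighborhoods). Then for every x : Fin n → ℝ and λ : ℝ with λ ≠ 0, x ≠ 0 and (a * aᵀ).mulVec x = λ • x, one has x i = x j; and likewise every eigenvector of aᵀ * a with nonzero eigenvalue satisfies x i = x j. -/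
open Matrix

namespace Matrix

variable {l m n R : Type*}

theorem mul_row_eq_of_row_eq [Fintype m] [NonUnitalNonAssocSemiring R] {A : Matrix l m R}
    (B : Matrix m n R) {i j : l} (hij : A i = A j) : (A * B) i = (A * B) j := by
  ext k
  simp only [mul_apply, hij]

theorem mulVec_apply_eq_of_row_eq [Fintype n] [NonUnitalNonAssocSemiring R]
    {M : Matrix m n R} {i j : m} (hij : M i = M j) (x : n → R) :
    (M *ᵥ x) i = (M *ᵥ x) j := by
  simp only [mulVec, hij]

theorem eq_of_mulVec_eq_smul_of_row_eq [Fintype n] [Ring R] [NoZeroDivisors R]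
    {M : Matrix n n R} {i j : n} (hij : M i = M j) {x : n → R} {lam : R} (hlam : lam ≠ 0)
    (hx : M *ᵥ x = lam • x) : x i = x j := by
  have hrow := mulVec_apply_eq_of_row_eq hij x
  rw [hx] at hrow
  exact mul_left_cancel₀ hlam hrow

end Matrix

/-- If nodes `i` and `j` have identical out- and in-neighborhoods in `a`, then every
eigenvector of `a * aᵀ` with nonzero eigenvalue satisfies `x i = x j`, and likewise
every eigenvector of `aᵀ * a` with nonzero eigenvalue satisfies `x i = x j`. -/
theorem stmt7 {n : ℕ} (a : Matrix (Fin n) (Fin n) ℝ) (i j : Fin n)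
    (h : ∀ v, a i v = a j v ∧ a v i = a v j) :
    (∀ (x : Fin n → ℝ) (lam : ℝ), lam ≠ 0 → x ≠ 0 →
      (a * aᵀ).mulVec x = lam • x → x i = x j) ∧
    (∀ (x : Fin n → ℝ) (lam : ℝ), lam ≠ 0 → x ≠ 0 →
      (aᵀ * a).mulVec x = lam • x → x i = x j) := by
  have hrow : a i = a j := funext fun v => (h v).1
  have hcol : aᵀ i = aᵀ j := funext fun v => (h v).2
  exact ⟨fun _ _ hlam _ hx =>
      eq_of_mulVec_eq_smul_of_row_eq (mul_row_eq_of_row_eq aᵀ hrow) hlam hx,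
    fun _ _ hlam _ hx =>
      eq_of_mulVec_eq_smul_of_row_eq (mul_row_eq_of_row_eq a hcol) hlam hx⟩
end

section
/- Let a : Matrix (Fin n) (Fin n) ℝ be a binary matrix (every entry is 0 or 1) and let i ≠ j in Fin n. Then the following are equivalent: (1) every eigenvector x of a * aᵀ with nonzero eigenvalue satisfies x i = x j, and every eigenvector x of aᵀ * a with nonzero eigenvalue satisfies x i = x j; (2) for all v in Fin n, a i v = a j v and a v i = a v j. Moreover, if (2) holds, then the transposition τ swapping i and j is an automorphism of a (for all k, l: a (τ k) (τ l) = a k l), so i and j are isomorphic nodes. -/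
/-!
Rows `i` and `j` of a Hermitian matrix `A = U D Uᴴ` agree as soon as every eigenvector with
nonzero eigenvalue agrees at `i` and `j`: the columns of `U` are eigenvectors, and the columns
with eigenvalue zero are killed by `D`. Conversely, equal rows force `μ x i = μ x j` for every
eigenpair. For the Gram matrix `G = a aᵀ`, equal rows `i`, `j` of `G` mean equal rows of `a`,
since `‖a i - a j‖² = G i i - G i j - G j i + G j j`. Applied to `a` and `aᵀ`, this says that the
two nodes have the same out- and in-neighbourhoods, and then the transposition fixes `a`.
-/

open Matrix

namespace Matrix

variable {n : Type*} [Fintype n]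

theorem apply_eq_apply_of_row_eq_of_mulVec_eq_smul {K : Type*} [Field K] {M : Matrix n n K}
    {i j : n} (hM : M i = M j) {x : n → K} {μ : K} (hμ : μ ≠ 0) (hx : M *ᵥ x = μ • x) :
    x i = x j := by
  have h : (M *ᵥ x) i = (M *ᵥ x) j := by simp only [mulVec, hM]
  simpa [hx, hμ] using h

theorem IsHermitian.row_eq_row_of_eigenvector_apply_eq {𝕜 : Type*} [RCLike 𝕜] [DecidableEq n]
    {A : Matrix n n 𝕜} (hA : A.IsHermitian) {i j : n}
    (h : ∀ (x : n → 𝕜) (μ : 𝕜), μ ≠ 0 → x ≠ 0 → A *ᵥ x = μ • x → x i = x j) :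
    A i = A j := by
  set U : Matrix n n 𝕜 := (hA.eigenvectorUnitary : Matrix n n 𝕜)
  have hcol : ∀ m, U i m * hA.eigenvalues m = U j m * hA.eigenvalues m := by
    intro m
    rcases eq_or_ne (hA.eigenvalues m) 0 with h0 | h0
    · simp [h0]
    · congr 1
      refine h (hA.eigenvectorBasis m) _ (RCLike.ofReal_ne_zero.mpr h0) ?_ ?_
      · simpa using hA.eigenvectorBasis.orthonormal.ne_zero m
      · rw [hA.mulVec_eigenvectorBasis, RCLike.real_smul_eq_coe_smul (K := 𝕜)]
  set D : Matrix n n 𝕜 := diagonal (RCLike.ofReal ∘ hA.eigenvalues)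
  have hUD : (U * D) i = (U * D) j := by
    ext m
    simpa only [D, mul_diagonal, Function.comp_apply] using hcol m
  have hspec : A = U * D * star U := hA.spectral_theorem
  rw [hspec]
  ext l
  simp only [mul_apply', hUD]

theorem mul_transpose_self_row_eq_iff {m R : Type*} [CommRing R] [LinearOrder R]
    [IsStrictOrderedRing R] {a : Matrix m n R} {i j : m} :
    (a * aᵀ) i = (a * aᵀ) j ↔ a i = a j := by
  refine ⟨fun h => ?_, fun h => by ext k; simp only [mul_apply', h]⟩
  have hG : ∀ k l, (a * aᵀ) k l = a k ⬝ᵥ a l := fun k l => rfl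
  have hii := congrFun h i
  have hij := congrFun h j
  rw [hG, hG] at hii hij
  rw [← sub_eq_zero, ← dotProduct_self_eq_zero, sub_dotProduct, dotProduct_sub, dotProduct_sub]
  linear_combination hii - hij

theorem IsHermitian.row_eq_row_iff_eigenvector_apply_eq {𝕜 : Type*} [RCLike 𝕜] [DecidableEq n]
    {A : Matrix n n 𝕜} (hA : A.IsHermitian) {i j : n} :
    A i = A j ↔ ∀ (x : n → 𝕜) (μ : 𝕜), μ ≠ 0 → x ≠ 0 → A *ᵥ x = μ • x → x i = x j :=
  ⟨fun hM _ _ hμ _ hx => apply_eq_apply_of_row_eq_of_mulVec_eq_smul hM hμ hx,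
    hA.row_eq_row_of_eigenvector_apply_eq⟩

theorem eigenvector_mul_transpose_self_apply_eq_iff_row_eq {m : Type*} [Fintype m]
    [DecidableEq m] {a : Matrix m n ℝ} {i j : m} :
    (∀ (x : m → ℝ) (μ : ℝ), μ ≠ 0 → x ≠ 0 → (a * aᵀ) *ᵥ x = μ • x → x i = x j) ↔ a i = a j := by
  have hA : (a * aᵀ).IsHermitian := by
    simpa only [conjTranspose_eq_transpose_of_trivial] using isHermitian_mul_conjTranspose_self a
  rw [← hA.row_eq_row_iff_eigenvector_apply_eq, mul_transpose_self_row_eq_iff]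

end Matrix

theorem stmt8_general {n : ℕ} (a : Matrix (Fin n) (Fin n) ℝ)
    (i j : Fin n) :
    (((∀ (x : Fin n → ℝ) (lam : ℝ), lam ≠ 0 → x ≠ 0 →
        (a * aᵀ).mulVec x = lam • x → x i = x j) ∧
      (∀ (x : Fin n → ℝ) (lam : ℝ), lam ≠ 0 → x ≠ 0 →
        (aᵀ * a).mulVec x = lam • x → x i = x j)) ↔
      (∀ v, a i v = a j v ∧ a v i = a v j)) ∧
    ((∀ v, a i v = a j v ∧ a v i = a v j) →
      ∀ k l, a (Equiv.swap i j k) (Equiv.swap i j l) = a k l) := by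
  have hneighbors : (∀ v, a i v = a j v ∧ a v i = a v j) ↔ a i = a j ∧ aᵀ i = aᵀ j := by
    simp only [funext_iff, transpose_apply, forall_and]
  have hcols := eigenvector_mul_transpose_self_apply_eq_iff_row_eq (a := aᵀ) (i := i) (j := j)
  rw [transpose_transpose] at hcols
  refine ⟨by rw [eigenvector_mul_transpose_self_apply_eq_iff_row_eq, hcols, hneighbors],
    fun h k l => ?_⟩
  obtain ⟨hrow, hcol⟩ := hneighbors.mp h
  rw [Equiv.apply_swap_eq_self hrow, Equiv.apply_swap_eq_self (v := a k) (congrFun hcol k)]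

/-- Theorem 4 of the paper (the invariances of SVD): for a binary adjacency matrix,
two distinct nodes `i ≠ j` get the same SVD embedding (all eigenvectors of the Gram
matrices `a * aᵀ` and `aᵀ * a` with nonzero eigenvalue take equal values at `i` and
`j`) if and only if they have the exact same neighborhood; moreover, in that case the
transposition swapping `i` and `j` is an automorphism of `a`, so `i` and `j` are
isomorphic nodes. -/
theorem stmt8 {n : ℕ} (a : Matrix (Fin n) (Fin n) ℝ) (ha : ∀ i j, a i j = 0 ∨ a i j = 1)
    (i j : Fin n) (hij : i ≠ j) :
    (((∀ (x : Fin n → ℝ) (lam : ℝ), lam ≠ 0 → x ≠ 0 →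
        (a * aᵀ).mulVec x = lam • x → x i = x j) ∧
      (∀ (x : Fin n → ℝ) (lam : ℝ), lam ≠ 0 → x ≠ 0 →
        (aᵀ * a).mulVec x = lam • x → x i = x j)) ↔
      (∀ v, a i v = a j v ∧ a v i = a v j)) ∧
    ((∀ v, a i v = a j v ∧ a v i = a v j) →
      ∀ k l, a (Equiv.swap i j k) (Equiv.swap i j l) = a k l) :=
  stmt8_general a i j
end

section
/- Let m be a natural number, a : Matrix (Fin m) (Fin m) Bool a symmetric matrix (a x y = a y x), and i, j ∈ Fin m with a i j = true. Define the disjoint-union adjacency b on the vertex set Fin m ⊕ Fin m by b (inl x) (inl y) = a x y, b (inr x) (inr y) = a x y, and b (inl x) (inr y) = b (inr x) (inl y) = false. Then: (1) the swap permutation σ of Fin m ⊕ Fin m exchanging inl x with inr x for all x is an automorphism of b, and the identity is an automorphism of b, so there exist automorphisms π, π' of b with π (inl i) = inl i and π' (inl j) = inr j; (2) there is no automorphism π* of b with π* (inl i) = inl i and π* (inl j) = inr j. Hence b is a pairwise symmetric graph with witnesses (inl i, inl j) and (inl i, inr j). -/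
/-! The swap of the two copies is an automorphism, so `inl j` and `inr j` are node-wise
isomorphic; but automorphisms preserve adjacency, and `(inl i, inl j)` is an edge while
`(inl i, inr j)` is not, so the two pairs are not isomorphic as pairs. -/

def IsAut {V : Type*} (b : V → V → Bool) (π : Equiv.Perm V) : Prop :=
  ∀ k l, b (π k) (π l) = b k l

theorem isAut_refl {V : Type*} (b : V → V → Bool) : IsAut b (Equiv.refl V) :=
  fun _ _ => rfl

theorem isAut_sumComm {α : Type*} (b : α ⊕ α → α ⊕ α → Bool)
    (hdiag : ∀ x y, b (.inl x) (.inl y) = b (.inr x) (.inr y))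
    (hcross : ∀ x y, b (.inl x) (.inr y) = b (.inr x) (.inl y)) :
    IsAut b (Equiv.sumComm α α) := by
  rintro (k | k) (l | l) <;> simp [hdiag, hcross]

theorem IsAut.apply_eq_true {V : Type*} {b : V → V → Bool} {π : Equiv.Perm V}
    (hπ : IsAut b π) {k l : V} (hkl : b k l = true) : b (π k) (π l) = true :=
  (hπ k l).trans hkl

theorem not_exists_isAut_edge_to_nonedge {V : Type*} {b : V → V → Bool} {k l k' l' : V}
    (hkl : b k l = true) (hkl' : b k' l' = false) :
    ¬ ∃ π : Equiv.Perm V, IsAut b π ∧ π k = k' ∧ π l = l' := by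
  rintro ⟨π, hπ, rfl, rfl⟩
  simpa [hkl'] using hπ.apply_eq_true hkl

theorem stmt10_general {m : ℕ} (a : Matrix (Fin m) (Fin m) Bool)
    (i j : Fin m) (hij : a i j = true)
    (b : (Fin m ⊕ Fin m) → (Fin m ⊕ Fin m) → Bool)
    (hll : ∀ x y, b (Sum.inl x) (Sum.inl y) = a x y)
    (hrr : ∀ x y, b (Sum.inr x) (Sum.inr y) = a x y)
    (hlr : ∀ x y, b (Sum.inl x) (Sum.inr y) = false)
    (hrl : ∀ x y, b (Sum.inr x) (Sum.inl y) = false) :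
    (IsAut b (Equiv.sumComm (Fin m) (Fin m)) ∧ IsAut b (Equiv.refl (Fin m ⊕ Fin m)) ∧
      ∃ π π' : Equiv.Perm (Fin m ⊕ Fin m), IsAut b π ∧ IsAut b π' ∧
        π (Sum.inl i) = Sum.inl i ∧ π' (Sum.inl j) = Sum.inr j) ∧
    ¬ ∃ πstar : Equiv.Perm (Fin m ⊕ Fin m), IsAut b πstar ∧
        πstar (Sum.inl i) = Sum.inl i ∧ πstar (Sum.inl j) = Sum.inr j := by
  have hswap : IsAut b (Equiv.sumComm (Fin m) (Fin m)) :=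
    isAut_sumComm b (fun x y => by rw [hll, hrr]) (fun x y => by rw [hlr, hrl])
  have hedge : b (Sum.inl i) (Sum.inl j) = true := by rw [hll, hij]
  exact ⟨⟨hswap, isAut_refl b, Equiv.refl _, Equiv.sumComm _ _, isAut_refl b, hswap, rfl,
    rfl⟩, not_exists_isAut_edge_to_nonedge hedge (hlr i j)⟩

/-- The disjoint union of a symmetric graph `a` (containing an edge `i j`) with a copy
of itself is pairwise symmetric: the component swap and the identity are automorphisms
(yielding automorphisms `π, π'` with `π (inl i) = inl i` and `π' (inl j) = inr j`), but
no single automorphism `π*` satisfies `π* (inl i) = inl i` and `π* (inl j) = inr j`. -/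
theorem stmt10 {m : ℕ} (a : Matrix (Fin m) (Fin m) Bool) (hsymm : ∀ x y, a x y = a y x)
    (i j : Fin m) (hij : a i j = true)
    (b : (Fin m ⊕ Fin m) → (Fin m ⊕ Fin m) → Bool)
    (hll : ∀ x y, b (Sum.inl x) (Sum.inl y) = a x y)
    (hrr : ∀ x y, b (Sum.inr x) (Sum.inr y) = a x y)
    (hlr : ∀ x y, b (Sum.inl x) (Sum.inr y) = false)
    (hrl : ∀ x y, b (Sum.inr x) (Sum.inl y) = false) :
    (IsAut b (Equiv.sumComm (Fin m) (Fin m)) ∧ IsAut b (Equiv.refl (Fin m ⊕ Fin m)) ∧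
      ∃ π π' : Equiv.Perm (Fin m ⊕ Fin m), IsAut b π ∧ IsAut b π' ∧
        π (Sum.inl i) = Sum.inl i ∧ π' (Sum.inl j) = Sum.inr j) ∧
    ¬ ∃ πstar : Equiv.Perm (Fin m ⊕ Fin m), IsAut b πstar ∧
        πstar (Sum.inl i) = Sum.inl i ∧ πstar (Sum.inl j) = Sum.inr j :=
  stmt10_general a i j hij b hll hrr hlr hrl
end
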